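/- Let t ≥ 3 and let H be a finite complete 3-partite 3-uniform hypergraph with nonempty parts V_1, V_2, V_3, equipped with a spanning edge-coloring using t+3 colors such that the vertex set of H cannot be covered by t+1 or fewer monochromatic components. Then for any vertices a ∈ V_1, b ∈ V_2, c ∈ V_3, there is at most one color j such that a, b, and c lie in three pairwise distinct monochromatic components of color j. -/

import Mathlib

/-- An edge of the complete r-partite r-uniform hypergraph with part assignment `p`
is a transversal: a choice of one vertex from each part. -/
def IsTransversal {V : Type*} {r : ℕ} (p : V → Fin r) (e : Fin r → V) : Prop :=
  ∀ i, p (e i) = i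

/-- `u` and `v` lie in the same monochromatic component of color `c`:
they are joined by a (possibly empty) sequence of edges of color `c`
in which consecutive edges intersect. -/
def SameComp {V : Type*} {r k : ℕ} (p : V → Fin r) (χ : (Fin r → V) → Fin k)
    (c : Fin k) (u v : V) : Prop :=
  Relation.ReflTransGen
    (fun a b => ∃ e, IsTransversal p e ∧ χ e = c ∧ (∃ i, e i = a) ∧ (∃ j, e j = b)) u v

/-- The coloring is spanning: every vertex is contained in an edge of every color. -/
def SpanningColoring {V : Type*} {r k : ℕ} (p : V → Fin r)
    (χ : (Fin r → V) → Fin k) : Prop :=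
  ∀ (v : V) (c : Fin k), ∃ e, IsTransversal p e ∧ χ e = c ∧ ∃ i, e i = v

/-- The vertex set can be covered by at most `m` monochromatic components;
a component is recorded as a pair (color, representative vertex). -/
def CoveredByComponents {V : Type*} {r k : ℕ} (p : V → Fin r)
    (χ : (Fin r → V) → Fin k) (m : ℕ) : Prop :=
  ∃ S : Finset (Fin k × V), S.card ≤ m ∧
    ∀ u : V, ∃ q ∈ S, SameComp p χ q.1 u q.2

lemma sameComp_symm {V : Type*} {r k : ℕ} {p : V → Fin r} {χ : (Fin r → V) → Fin k}
    {c : Fin k} {u v : V} (h : SameComp p χ c u v) : SameComp p χ c v u := by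
  refine (@Relation.ReflTransGen.stdSymm _ _ ⟨?_⟩).symm _ _ h
  rintro x y ⟨e, h1, h2, hi, hj⟩
  exact ⟨e, h1, h2, hj, hi⟩

lemma sameComp_edge {V : Type*} {r k : ℕ} {p : V → Fin r} {χ : (Fin r → V) → Fin k}
    {c : Fin k} {e : Fin r → V} (ht : IsTransversal p e) (hc : χ e = c)
    (i j : Fin r) : SameComp p χ c (e i) (e j) :=
  Relation.ReflTransGen.single ⟨e, ht, hc, ⟨i, rfl⟩, ⟨j, rfl⟩⟩

/-- In a spanning (t+3)-coloring of a complete 3-partite 3-uniform hypergraph whose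
vertex set cannot be covered by t+1 monochromatic components, any transversal a, b, c
has at most one distinguishing color. -/
theorem claim_at_most_one_distinguishing (t : ℕ) (ht : 3 ≤ t)
    (V : Type*) [Fintype V] (p : V → Fin 3) (hp : Function.Surjective p)
    (χ : (Fin 3 → V) → Fin (t + 3))
    (hspan : SpanningColoring p χ)
    (hncov : ¬ CoveredByComponents p χ (t + 1))
    (a b c : V) (ha : p a = 0) (hb : p b = 1) (hc : p c = 2) :
    ∀ j₁ j₂ : Fin (t + 3),
      (¬ SameComp p χ j₁ a b ∧ ¬ SameComp p χ j₁ b c ∧ ¬ SameComp p χ j₁ a c) →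
      (¬ SameComp p χ j₂ a b ∧ ¬ SameComp p χ j₂ b c ∧ ¬ SameComp p χ j₂ a c) →
      j₁ = j₂ := by
  classical
  intro j₁ j₂ h1 h2
  by_contra hne
  obtain ⟨hab1, hbc1, hac1⟩ := h1
  obtain ⟨hab2, hbc2, hac2⟩ := h2
  apply hncov
  set rep : Fin (t+3) → V := fun j =>
    if SameComp p χ j a b ∨ SameComp p χ j b c then b else a with hrep
  have key : ∀ v : V, ∃ j : Fin (t+3), j ≠ j₁ ∧ j ≠ j₂ ∧
      ((SameComp p χ j v b ∧ SameComp p χ j v c) ∨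
       (SameComp p χ j v a ∧ SameComp p χ j v c) ∨
       (SameComp p χ j v a ∧ SameComp p χ j v b)) := by
    intro v
    have h3 : ∀ i : Fin 3, i = 0 ∨ i = 1 ∨ i = 2 := by decide
    rcases h3 (p v) with hv | hv | hv
    · have htr : IsTransversal p ![v, b, c] := by
        intro i; fin_cases i <;> simpa [hv, hb, hc]
      have hvb : SameComp p χ (χ ![v, b, c]) v b := sameComp_edge htr rfl 0 1
      have hvc : SameComp p χ (χ ![v, b, c]) v c := sameComp_edge htr rfl 0 2
      have hbc : SameComp p χ (χ ![v, b, c]) b c := sameComp_edge htr rfl 1 2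
      refine ⟨χ ![v, b, c], ?_, ?_, Or.inl ⟨hvb, hvc⟩⟩
      · intro h; exact hbc1 (h ▸ hbc)
      · intro h; exact hbc2 (h ▸ hbc)
    · have htr : IsTransversal p ![a, v, c] := by
        intro i; fin_cases i <;> simpa [hv, ha, hc]
      have hva : SameComp p χ (χ ![a, v, c]) v a := sameComp_edge htr rfl 1 0
      have hvc : SameComp p χ (χ ![a, v, c]) v c := sameComp_edge htr rfl 1 2
      have hac : SameComp p χ (χ ![a, v, c]) a c := sameComp_edge htr rfl 0 2
      refine ⟨χ ![a, v, c], ?_, ?_, Or.inr (Or.inl ⟨hva, hvc⟩)⟩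
      · intro h; exact hac1 (h ▸ hac)
      · intro h; exact hac2 (h ▸ hac)
    · have htr : IsTransversal p ![a, b, v] := by
        intro i; fin_cases i <;> simpa [hv, ha, hb]
      have hva : SameComp p χ (χ ![a, b, v]) v a := sameComp_edge htr rfl 2 0
      have hvb : SameComp p χ (χ ![a, b, v]) v b := sameComp_edge htr rfl 2 1
      have hab : SameComp p χ (χ ![a, b, v]) a b := sameComp_edge htr rfl 0 1
      refine ⟨χ ![a, b, v], ?_, ?_, Or.inr (Or.inr ⟨hva, hvb⟩)⟩
      · intro h; exact hab1 (h ▸ hab)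
      · intro h; exact hab2 (h ▸ hab)
  refine ⟨(Finset.univ \ {j₁, j₂}).image (fun j => (j, rep j)), ?_, ?_⟩
  · calc ((Finset.univ \ {j₁, j₂}).image (fun j => (j, rep j))).card
        ≤ (Finset.univ \ ({j₁, j₂} : Finset (Fin (t+3)))).card := Finset.card_image_le
      _ = (t + 3) - 2 := by
          rw [Finset.card_sdiff_of_subset (Finset.subset_univ _), Finset.card_pair hne]
          simp
      _ ≤ t + 1 := by omega
  · intro u
    obtain ⟨j, hj1, hj2, hcase⟩ := key u
    refine ⟨(j, rep j), Finset.mem_image_of_mem _ (by simp [hj1, hj2]), ?_⟩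
    show SameComp p χ j u (rep j)
    by_cases hB : SameComp p χ j a b ∨ SameComp p χ j b c
    · have hrepb : rep j = b := by rw [hrep]; exact if_pos hB
      rw [hrepb]
      rcases hcase with ⟨hub, _⟩ | ⟨hua, huc⟩ | ⟨_, hub⟩
      · exact hub
      · rcases hB with hab' | hbc'
        · exact hua.trans hab'
        · exact huc.trans (sameComp_symm hbc')
      · exact hub
    · have hrepa : rep j = a := by rw [hrep]; exact if_neg hB
      rw [hrepa]
      push_neg at hB
      rcases hcase with ⟨hub, huc⟩ | ⟨hua, _⟩ | ⟨hua, _⟩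
      · exact absurd ((sameComp_symm hub).trans huc) hB.2
      · exact hua
      · exact hua
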